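/- arXiv:1410.4364 — 3 statements merged into one kernel-verified Lean document; each statement's English description precedes it below -/
import Mathlib

section
/- For every formula A of intuitionistic predicate logic, if A is provable in intuitionistic logic then its Girard ∘-translation A∘ is provable in intuitionistic affine logic. -/
/-- Formulas of intuitionistic affine logic (HOAS quantifiers over arbitrary types). -/
inductive AForm : Type 1 where
  | atom   : Prop → AForm
  | tensor : AForm → AForm → AForm
  | oplus  : AForm → AForm → AForm
  | limp   : AForm → AForm → AForm
  | bang   : AForm → AForm
  | all    : {τ : Type} → (τ → AForm) → AForm
  | ex     : {τ : Type} → (τ → AForm) → AForm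

/-- Natural-deduction style provability for intuitionistic affine logic:
intuitionistic linear logic (⊗, ⊕, ⊸, !, ∀, ∃) with unrestricted weakening. -/
inductive ALProof : List AForm → AForm → Prop where
  | id (A : AForm) : ALProof [A] A
  | exch {Γ Δ : List AForm} {A : AForm} : Γ.Perm Δ → ALProof Γ A → ALProof Δ A
  | weak {Γ : List AForm} {A : AForm} (B : AForm) : ALProof Γ A → ALProof (B :: Γ) A
  | limpI {Γ : List AForm} {A B : AForm} : ALProof (A :: Γ) B → ALProof Γ (A.limp B)
  | limpE {Γ Δ : List AForm} {A B : AForm} :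
      ALProof Γ (A.limp B) → ALProof Δ A → ALProof (Γ ++ Δ) B
  | tensorI {Γ Δ : List AForm} {A B : AForm} :
      ALProof Γ A → ALProof Δ B → ALProof (Γ ++ Δ) (A.tensor B)
  | tensorE {Γ Δ : List AForm} {A B C : AForm} :
      ALProof Γ (A.tensor B) → ALProof (A :: B :: Δ) C → ALProof (Γ ++ Δ) C
  | oplusI₁ {Γ : List AForm} {A : AForm} (B : AForm) : ALProof Γ A → ALProof Γ (A.oplus B)
  | oplusI₂ {Γ : List AForm} {B : AForm} (A : AForm) : ALProof Γ B → ALProof Γ (A.oplus B)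
  | oplusE {Γ Δ : List AForm} {A B C : AForm} : ALProof Γ (A.oplus B) →
      ALProof (A :: Δ) C → ALProof (B :: Δ) C → ALProof (Γ ++ Δ) C
  | bangI {Γ : List AForm} {A : AForm} :
      ALProof (Γ.map AForm.bang) A → ALProof (Γ.map AForm.bang) A.bang
  | bangE {Γ : List AForm} {A : AForm} : ALProof Γ A.bang → ALProof Γ A
  | bangC {Γ : List AForm} {A B : AForm} :
      ALProof (A.bang :: A.bang :: Γ) B → ALProof (A.bang :: Γ) B
  | allI {Γ : List AForm} {τ : Type} {Φ : τ → AForm} :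
      (∀ a, ALProof Γ (Φ a)) → ALProof Γ (AForm.all Φ)
  | allE {Γ : List AForm} {τ : Type} {Φ : τ → AForm} (a : τ) :
      ALProof Γ (AForm.all Φ) → ALProof Γ (Φ a)
  | exI {Γ : List AForm} {τ : Type} {Φ : τ → AForm} (a : τ) :
      ALProof Γ (Φ a) → ALProof Γ (AForm.ex Φ)
  | exE {Γ Δ : List AForm} {τ : Type} {Φ : τ → AForm} {C : AForm} :
      ALProof Γ (AForm.ex Φ) → (∀ a, ALProof (Φ a :: Δ) C) → ALProof (Γ ++ Δ) C

/-- Formulas of intuitionistic predicate logic (HOAS quantifiers over arbitrary types). -/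
inductive IForm : Type 1 where
  | atom : Prop → IForm
  | and  : IForm → IForm → IForm
  | or   : IForm → IForm → IForm
  | imp  : IForm → IForm → IForm
  | all  : {τ : Type} → (τ → IForm) → IForm
  | ex   : {τ : Type} → (τ → IForm) → IForm

/-- Natural-deduction provability for intuitionistic predicate logic
(full structural rules: exchange, weakening, contraction). -/
inductive IProof : List IForm → IForm → Prop where
  | id (A : IForm) : IProof [A] A
  | exch {Γ Δ : List IForm} {A : IForm} : Γ.Perm Δ → IProof Γ A → IProof Δ A
  | weak {Γ : List IForm} {A : IForm} (B : IForm) : IProof Γ A → IProof (B :: Γ) A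
  | contr {Γ : List IForm} {A B : IForm} : IProof (B :: B :: Γ) A → IProof (B :: Γ) A
  | impI {Γ : List IForm} {A B : IForm} : IProof (A :: Γ) B → IProof Γ (A.imp B)
  | impE {Γ Δ : List IForm} {A B : IForm} :
      IProof Γ (A.imp B) → IProof Δ A → IProof (Γ ++ Δ) B
  | andI {Γ Δ : List IForm} {A B : IForm} :
      IProof Γ A → IProof Δ B → IProof (Γ ++ Δ) (A.and B)
  | andE₁ {Γ : List IForm} {A B : IForm} : IProof Γ (A.and B) → IProof Γ A
  | andE₂ {Γ : List IForm} {A B : IForm} : IProof Γ (A.and B) → IProof Γ B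
  | orI₁ {Γ : List IForm} {A : IForm} (B : IForm) : IProof Γ A → IProof Γ (A.or B)
  | orI₂ {Γ : List IForm} {B : IForm} (A : IForm) : IProof Γ B → IProof Γ (A.or B)
  | orE {Γ Δ : List IForm} {A B C : IForm} : IProof Γ (A.or B) →
      IProof (A :: Δ) C → IProof (B :: Δ) C → IProof (Γ ++ Δ) C
  | allI {Γ : List IForm} {τ : Type} {Φ : τ → IForm} :
      (∀ a, IProof Γ (Φ a)) → IProof Γ (IForm.all Φ)
  | allE {Γ : List IForm} {τ : Type} {Φ : τ → IForm} (a : τ) :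
      IProof Γ (IForm.all Φ) → IProof Γ (Φ a)
  | exI {Γ : List IForm} {τ : Type} {Φ : τ → IForm} (a : τ) :
      IProof Γ (Φ a) → IProof Γ (IForm.ex Φ)
  | exE {Γ Δ : List IForm} {τ : Type} {Φ : τ → IForm} {C : IForm} :
      IProof Γ (IForm.ex Φ) → (∀ a, IProof (Φ a :: Δ) C) → IProof (Γ ++ Δ) C

/-- Girard's ∘-translation of intuitionistic logic into intuitionistic affine logic. -/
def circ : IForm → AForm
  | .atom P => (AForm.atom P).bang
  | .and A B => (circ A).tensor (circ B)
  | .or A B => (circ A).oplus (circ B)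
  | .imp A B => ((circ A).limp (circ B)).bang
  | .all Φ => (AForm.all fun a => circ (Φ a)).bang
  | .ex Φ => AForm.ex fun a => circ (Φ a)

/-- Girard's ∗-translation of intuitionistic logic into intuitionistic affine logic. -/
def star : IForm → AForm
  | .atom P => AForm.atom P
  | .and A B => (star A).tensor (star B)
  | .or A B => ((star A).bang).oplus ((star B).bang)
  | .imp A B => ((star A).bang).limp (star B)
  | .all Φ => AForm.all fun a => star (Φ a)
  | .ex Φ => AForm.ex fun a => (star (Φ a)).bang

namespace GirardAux

open AForm

/-- Admissible cut. -/
theorem cut {Γ Δ : List AForm} {A C : AForm}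
    (h1 : ALProof Γ A) (h2 : ALProof (A :: Δ) C) : ALProof (Γ ++ Δ) C :=
  ALProof.exch List.perm_append_comm (ALProof.limpE (ALProof.limpI h2) h1)

/-- Cut at the head of the context. -/
theorem cut1 {Γ : List AForm} {A B C : AForm}
    (h1 : ALProof [A] B) (h2 : ALProof (B :: Γ) C) : ALProof (A :: Γ) C :=
  cut h1 h2

/-- Pointwise cut over a whole context. -/
theorem multiCut : ∀ {Γ Γ' : List AForm},
    List.Forall₂ (fun A B => ALProof [A] B) Γ' Γ →
    ∀ {C : AForm}, ALProof Γ C → ALProof Γ' C := by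
  intro Γ Γ' hrel
  induction hrel with
  | nil => intro C h; exact h
  | cons hAB _ ih =>
      intro C h
      -- h : ALProof (B :: Γ) C, hAB : ALProof [A] B
      have h' := cut1 hAB h
      -- rotate head to the end
      have h'' := ih (ALProof.limpI h')
      have h3 := ALProof.limpE h'' (ALProof.id _)
      exact ALProof.exch List.perm_append_comm h3

theorem forall₂_map {α : Type 1} (f g : α → AForm)
    (h : ∀ a, ALProof [f a] (g a)) :
    ∀ (l : List α), List.Forall₂ (fun A B => ALProof [A] B) (l.map f) (l.map g) := by
  intro l
  induction l with
  | nil => exact List.Forall₂.nil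
  | cons a l ih => exact List.Forall₂.cons (h a) ih

theorem deref (A : AForm) : ALProof [A.bang] A := ALProof.bangE (ALProof.id _)

/-- Storage: `circ A ⊢ !(circ A)`. -/
theorem store : ∀ A : IForm, ALProof [circ A] ((circ A).bang) := by
  intro A
  induction A with
  | atom P =>
      exact ALProof.bangI (Γ := [AForm.atom P]) (ALProof.id _)
  | and A B ihA ihB =>
      show ALProof [(circ A).tensor (circ B)] (((circ A).tensor (circ B)).bang)
      have hbb : ALProof [(circ A).bang, (circ B).bang] (((circ A).tensor (circ B)).bang) := by
        have := ALProof.tensorI (deref (circ A)) (deref (circ B))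
        exact ALProof.bangI (Γ := [circ A, circ B]) this
      have h1 : ALProof [circ A, (circ B).bang] (((circ A).tensor (circ B)).bang) :=
        cut1 ihA hbb
      have h2 : ALProof [circ A, circ B] (((circ A).tensor (circ B)).bang) := by
        have := ALProof.exch (List.Perm.swap _ _ _) h1
        have := cut1 ihB this
        exact ALProof.exch (List.Perm.swap _ _ _) this
      have := ALProof.tensorE (Δ := []) (ALProof.id ((circ A).tensor (circ B))) h2
      simpa using this
  | or A B ihA ihB =>
      show ALProof [(circ A).oplus (circ B)] (((circ A).oplus (circ B)).bang)
      have hA : ALProof [circ A] (((circ A).oplus (circ B)).bang) := by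
        refine cut1 ihA ?_
        exact ALProof.bangI (Γ := [circ A]) (ALProof.oplusI₁ _ (deref (circ A)))
      have hB : ALProof [circ B] (((circ A).oplus (circ B)).bang) := by
        refine cut1 ihB ?_
        exact ALProof.bangI (Γ := [circ B]) (ALProof.oplusI₂ _ (deref (circ B)))
      have := ALProof.oplusE (Δ := []) (ALProof.id ((circ A).oplus (circ B))) hA hB
      simpa using this
  | imp A B _ _ =>
      show ALProof [((circ A).limp (circ B)).bang] ((((circ A).limp (circ B)).bang).bang)
      exact ALProof.bangI (Γ := [(circ A).limp (circ B)]) (ALProof.id _)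
  | all Φ ih =>
      show ALProof [(AForm.all fun a => circ (Φ a)).bang]
        (((AForm.all fun a => circ (Φ a)).bang).bang)
      exact ALProof.bangI (Γ := [AForm.all fun a => circ (Φ a)]) (ALProof.id _)
  | ex Φ ih =>
      show ALProof [AForm.ex fun a => circ (Φ a)] ((AForm.ex fun a => circ (Φ a)).bang)
      have h : ∀ a, ALProof [circ (Φ a)] ((AForm.ex fun a => circ (Φ a)).bang) := by
        intro a
        refine cut1 (ih a) ?_
        exact ALProof.bangI (Γ := [circ (Φ a)])
          (ALProof.exI a (deref (circ (Φ a))))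
      have := ALProof.exE (Δ := []) (ALProof.id (AForm.ex fun a => circ (Φ a))) h
      simpa using this

/-- Promotion: under a `circ`-translated context, any provable formula can be banged. -/
theorem promo {Γ : List IForm} {D : AForm}
    (h : ALProof (Γ.map circ) D) : ALProof (Γ.map circ) D.bang := by
  have h1 : ALProof (Γ.map fun G => (circ G).bang) D :=
    multiCut (forall₂_map _ _ (fun G => deref (circ G)) Γ) h
  have h2 : ALProof ((Γ.map circ).map AForm.bang) D := by
    simpa [List.map_map, Function.comp_def] using h1
  have h3 := ALProof.bangI h2
  have h4 : ALProof (Γ.map fun G => (circ G).bang) D.bang := by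
    simpa [List.map_map, Function.comp_def] using h3
  exact multiCut (forall₂_map _ _ (fun G => store G) Γ) h4

/-- Main lemma: soundness of the ∘-translation with contexts. -/
theorem main : ∀ {Γ : List IForm} {A : IForm}, IProof Γ A →
    ALProof (Γ.map circ) (circ A) := by
  intro Γ A h
  induction h with
  | id A => exact ALProof.id (circ A)
  | exch p _ ih => exact ALProof.exch (p.map circ) ih
  | weak B _ ih => exact ALProof.weak (circ B) ih
  | contr h ih =>
      -- ih : ALProof (circ B :: circ B :: Γ.map circ) (circ A)
      rename_i Γ A B
      have h1 : ALProof (Γ.map circ) ((circ B).limp ((circ B).limp (circ A))) :=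
        ALProof.limpI (ALProof.limpI ih)
      have h2 : ALProof ((Γ.map circ ++ [(circ B).bang]) ++ [(circ B).bang]) (circ A) :=
        ALProof.limpE (ALProof.limpE h1 (deref (circ B))) (deref (circ B))
      have p : ((Γ.map circ ++ [(circ B).bang]) ++ [(circ B).bang]).Perm
          ((circ B).bang :: (circ B).bang :: Γ.map circ) :=
        (List.perm_append_comm (l₁ := Γ.map circ ++ [(circ B).bang])
            (l₂ := [(circ B).bang])).trans
          (List.Perm.cons _ (List.perm_append_comm (l₁ := Γ.map circ) (l₂ := [(circ B).bang])))
      have h3 : ALProof ((circ B).bang :: (circ B).bang :: Γ.map circ) (circ A) :=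
        ALProof.exch p h2
      exact cut1 (store B) (ALProof.bangC h3)
  | impI h ih =>
      rename_i Γ A B
      show ALProof (Γ.map circ) (((circ A).limp (circ B)).bang)
      exact promo (ALProof.limpI ih)
  | impE h1 h2 ih1 ih2 =>
      rename_i Γ Δ A B
      have : ALProof (Γ.map circ ++ Δ.map circ) (circ B) :=
        ALProof.limpE (ALProof.bangE ih1) ih2
      simpa [List.map_append] using this
  | andI h1 h2 ih1 ih2 =>
      rename_i Γ Δ A B
      have := ALProof.tensorI ih1 ih2
      simpa [List.map_append, circ] using this
  | andE₁ h ih =>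
      rename_i Γ A B
      have hp : ALProof [circ A, circ B] (circ A) :=
        ALProof.exch (List.Perm.swap _ _ _) (ALProof.weak _ (ALProof.id _))
      have := ALProof.tensorE (Δ := []) ih hp
      simpa using this
  | andE₂ h ih =>
      rename_i Γ A B
      have hp : ALProof [circ A, circ B] (circ B) :=
        ALProof.weak _ (ALProof.id _)
      have := ALProof.tensorE (Δ := []) ih hp
      simpa using this
  | orI₁ B _ ih => exact ALProof.oplusI₁ _ ih
  | orI₂ A _ ih => exact ALProof.oplusI₂ _ ih
  | orE h h1 h2 ih ih1 ih2 =>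
      have := ALProof.oplusE ih ih1 ih2
      simpa [List.map_append] using this
  | allI h ih =>
      rename_i Γ τ Φ
      show ALProof (Γ.map circ) ((AForm.all fun a => circ (Φ a)).bang)
      exact promo (ALProof.allI ih)
  | allE a h ih =>
      exact ALProof.allE a (ALProof.bangE ih)
  | exI a h ih => exact ALProof.exI a ih
  | exE h hb ih ihb =>
      have := ALProof.exE ih ihb
      simpa [List.map_append] using this

end GirardAux

/-- Soundness of the Girard ∘-translation: intuitionistic provability of `A`
implies affine provability of `A∘`. -/
theorem circ_translation_sound (A : IForm) (h : IProof [] A) :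
    ALProof [] (circ A) := by
  simpa using GirardAux.main h
end

section
/- For every formula A of intuitionistic predicate logic, if A is provable in intuitionistic logic then !A* is provable in intuitionistic affine logic, where A* is the Girard ∗-translation. -/
private lemma star_bangI {Γ : List IForm} {A : AForm}
    (h : ALProof (Γ.map fun B => (star B).bang) A) :
    ALProof (Γ.map fun B => (star B).bang) A.bang := by
  have h' : ALProof ((Γ.map star).map AForm.bang) A := by
    simpa [List.map_map, Function.comp_def] using h
  have := ALProof.bangI h'
  simpa [List.map_map, Function.comp_def] using this

private lemma star_main {Γ : List IForm} {A : IForm} (h : IProof Γ A) :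
    ALProof (Γ.map fun B => (star B).bang) ((star A).bang) := by
  induction h with
  | id A => exact ALProof.id _
  | exch p _ ih => exact ALProof.exch (p.map _) ih
  | weak B _ ih => exact ALProof.weak _ ih
  | contr _ ih => exact ALProof.bangC ih
  | impI _ ih =>
    apply star_bangI
    exact ALProof.limpI (ALProof.bangE ih)
  | @impE Γ Δ A B _ _ ih1 ih2 =>
    have : ALProof ((Γ.map fun B => (star B).bang) ++ (Δ.map fun B => (star B).bang))
        (star B) := ALProof.limpE (ALProof.bangE ih1) ih2
    rw [← List.map_append] at this
    exact star_bangI this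
  | @andI Γ Δ A B _ _ ih1 ih2 =>
    have : ALProof ((Γ.map fun B => (star B).bang) ++ (Δ.map fun B => (star B).bang))
        ((star A).tensor (star B)) :=
      ALProof.tensorI (ALProof.bangE ih1) (ALProof.bangE ih2)
    rw [← List.map_append] at this
    exact star_bangI this
  | @andE₁ Γ A B _ ih =>
    apply star_bangI
    have hbr : ALProof [star A, star B] (star A) :=
      ALProof.exch (List.Perm.swap _ _ _) (ALProof.weak _ (ALProof.id _))
    have := ALProof.tensorE (Δ := []) (ALProof.bangE ih) hbr
    simpa using this
  | @andE₂ Γ A B _ ih =>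
    apply star_bangI
    have hbr : ALProof [star A, star B] (star B) :=
      ALProof.weak _ (ALProof.id _)
    have := ALProof.tensorE (Δ := []) (ALProof.bangE ih) hbr
    simpa using this
  | orI₁ B _ ih =>
    apply star_bangI
    exact ALProof.oplusI₁ _ ih
  | orI₂ A _ ih =>
    apply star_bangI
    exact ALProof.oplusI₂ _ ih
  | @orE Γ Δ A B C _ _ _ ih ihl ihr =>
    rw [List.map_append]
    exact ALProof.oplusE (ALProof.bangE ih) ihl ihr
  | allI _ ih =>
    apply star_bangI
    exact ALProof.allI fun a => ALProof.bangE (ih a)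
  | allE a _ ih =>
    apply star_bangI
    exact ALProof.allE a (ALProof.bangE ih)
  | exI a _ ih =>
    apply star_bangI
    exact ALProof.exI a ih
  | @exE Γ Δ τ Φ C _ _ ih ihb =>
    rw [List.map_append]
    exact ALProof.exE (ALProof.bangE ih) ihb

/-- Soundness of the Girard ∗-translation: intuitionistic provability of `A`
implies affine provability of `!A*`. -/
theorem star_translation_sound (A : IForm) (h : IProof [] A) :
    ALProof [] (star A).bang := by simpa using star_main h
end

section
/- In intuitionistic affine logic, the two Girard translations are interderivable in the sense that A∘ ⊸ !A* and !A* ⊸ A∘ are both provable, for every intuitionistic formula A. -/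
namespace ALProof

theorem cut {Γ Δ : List AForm} {A B : AForm} (h1 : ALProof Γ A)
    (h2 : ALProof (A :: Δ) B) : ALProof (Γ ++ Δ) B :=
  .exch List.perm_append_comm (.limpE (.limpI h2) h1)

theorem cut1 {A B C : AForm} (h1 : ALProof [A] B) (h2 : ALProof [B] C) :
    ALProof [A] C := cut h1 h2

theorem der {A : AForm} : ALProof [A.bang] A := .bangE (.id _)

theorem bang1 {A B : AForm} (h : ALProof [A.bang] B) : ALProof [A.bang] B.bang :=
  @ALProof.bangI [A] B h

theorem bang2 {A B C : AForm} (h : ALProof [A.bang, B.bang] C) :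
    ALProof [A.bang, B.bang] C.bang := @ALProof.bangI [A, B] C h

end ALProof

theorem circ_star_main (A : IForm) :
    ALProof [circ A] (_root_.star A).bang ∧ ALProof [(_root_.star A).bang] (circ A) := by
  induction A with
  | atom P =>
      exact ⟨.id _, .id _⟩
  | and B C ihB ihC =>
      obtain ⟨ihB1, ihB2⟩ := ihB
      obtain ⟨ihC1, ihC2⟩ := ihC
      simp only [circ, _root_.star]
      constructor
      · -- [cB ⊗ cC] ⊢ !(sB ⊗ sC)
        have step1 : ALProof [(_root_.star B).bang, (_root_.star C).bang]
            ((_root_.star B).tensor (_root_.star C)).bang :=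
          ALProof.bang2 (.tensorI ALProof.der ALProof.der)
        have step2 : ALProof [circ B, (_root_.star C).bang]
            ((_root_.star B).tensor (_root_.star C)).bang := ALProof.cut ihB1 step1
        have step3 : ALProof [circ C, circ B] ((_root_.star B).tensor (_root_.star C)).bang :=
          ALProof.cut ihC1 (.exch (List.Perm.swap _ _ _) step2)
        exact .tensorE (.id _) (.exch (List.Perm.swap _ _ _) step3)
      · -- [!(sB ⊗ sC)] ⊢ cB ⊗ cC
        have projB : ALProof [((_root_.star B).tensor (_root_.star C)).bang] (_root_.star B).bang :=
          ALProof.bang1 (.tensorE ALProof.der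
            (.exch (List.Perm.swap _ _ _) (.weak _ (.id _))))
        have projC : ALProof [((_root_.star B).tensor (_root_.star C)).bang] (_root_.star C).bang :=
          ALProof.bang1 (.tensorE ALProof.der (.weak _ (.id _)))
        have hB : ALProof [((_root_.star B).tensor (_root_.star C)).bang] (circ B) :=
          ALProof.cut1 projB ihB2
        have hC : ALProof [((_root_.star B).tensor (_root_.star C)).bang] (circ C) :=
          ALProof.cut1 projC ihC2
        exact .bangC (.tensorI hB hC)
  | or B C ihB ihC =>
      obtain ⟨ihB1, ihB2⟩ := ihB
      obtain ⟨ihC1, ihC2⟩ := ihC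
      simp only [circ, _root_.star]
      constructor
      · have b1 : ALProof [(_root_.star B).bang]
            (((_root_.star B).bang).oplus ((_root_.star C).bang)).bang :=
          ALProof.bang1 (.oplusI₁ _ (.id _))
        have b2 : ALProof [(_root_.star C).bang]
            (((_root_.star B).bang).oplus ((_root_.star C).bang)).bang :=
          ALProof.bang1 (.oplusI₂ _ (.id _))
        exact .oplusE (.id _) (ALProof.cut1 ihB1 b1) (ALProof.cut1 ihC1 b2)
      · exact .oplusE ALProof.der (.oplusI₁ _ ihB2) (.oplusI₂ _ ihC2)
  | imp B C ihB ihC =>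
      obtain ⟨ihB1, ihB2⟩ := ihB
      obtain ⟨ihC1, ihC2⟩ := ihC
      simp only [circ, _root_.star]
      constructor
      · have t1 : ALProof [((circ B).limp (circ C)).bang, (_root_.star B).bang] (circ C) :=
          .limpE ALProof.der ihB2
        have t2 : ALProof [((circ B).limp (circ C)).bang, (_root_.star B).bang] (_root_.star C) :=
          ALProof.cut t1 (.bangE ihC1)
        exact ALProof.bang1 (.limpI (.exch (List.Perm.swap _ _ _) t2))
      · have u1 : ALProof [(_root_.star B).bang, (((_root_.star B).bang).limp (_root_.star C)).bang]
            (_root_.star C) :=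
          .exch (List.Perm.swap _ _ _) (.limpE ALProof.der (.id ((_root_.star B).bang)))
        have u2 : ALProof [(_root_.star B).bang, (((_root_.star B).bang).limp (_root_.star C)).bang]
            (_root_.star C).bang :=
          @ALProof.bangI [_root_.star B, ((_root_.star B).bang).limp (_root_.star C)] _ u1
        have u3 : ALProof [(_root_.star B).bang, (((_root_.star B).bang).limp (_root_.star C)).bang]
            (circ C) := ALProof.cut u2 ihC2
        have u4 : ALProof [circ B, (((_root_.star B).bang).limp (_root_.star C)).bang] (circ C) :=
          ALProof.cut ihB1 u3
        exact ALProof.bang1 (.limpI u4)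
  | all Φ ih =>
      simp only [circ, _root_.star]
      constructor
      · have inner : ∀ a, ALProof [(AForm.all fun a => circ (Φ a)).bang]
            (_root_.star (Φ a)) := fun a =>
          .bangE (ALProof.cut (.allE a ALProof.der) (ih a).1)
        exact ALProof.bang1 (.allI inner)
      · have w : ∀ a, ALProof [(AForm.all fun a => _root_.star (Φ a)).bang]
            (circ (Φ a)) := fun a =>
          ALProof.cut (ALProof.bang1 (.allE a ALProof.der)) (ih a).2
        exact ALProof.bang1 (.allI w)
  | ex Φ ih =>
      simp only [circ, _root_.star]
      constructor
      · have b : ∀ a, ALProof [(_root_.star (Φ a)).bang]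
            (AForm.ex fun a => (_root_.star (Φ a)).bang).bang := fun a =>
          ALProof.bang1 (.exI a (.id _))
        exact .exE (.id _) fun a => ALProof.cut1 (ih a).1 (b a)
      · exact .exE ALProof.der fun a => .exI a (ih a).2

/-- The two Girard translations are interderivable in intuitionistic affine logic:
`A∘ ⊸ !A*` and `!A* ⊸ A∘` are both provable. -/
theorem circ_star_interderivable (A : IForm) :
    ALProof [] ((circ A).limp (star A).bang) ∧
    ALProof [] (((star A).bang).limp (circ A)) := by
  obtain ⟨h1, h2⟩ := circ_star_main A
  exact ⟨.limpI h1, .limpI h2⟩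
end
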